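/- Let P, Q : ℝ → ℂ^{d×d} be real analytic and 1-periodic, with each P(x) and Q(x) an orthogonal projection of constant ranks k and k' respectively. If dim(ran P(x) ∩ ran Q(x)) is constant in x, then the map assigning to x the orthogonal projection onto ran P(x) ∩ ran Q(x) is real analytic and 1-periodic; likewise, if dim(ran P(x) + ran Q(x)) is constant in x, then the map assigning to x the orthogonal projection onto ran P(x) + ran Q(x) is real analytic and 1-periodic. -/

import Mathlib

open MeasureTheory Filter Topology Matrix

/-- A real analytic, 1-periodic matrix valued map. -/
def AnalyticPeriodicMat {d e : ℕ} (A : ℝ → Matrix (Fin d) (Fin e) ℂ) : Prop :=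
  Function.Periodic A 1 ∧ ∀ (x : ℝ) (i : Fin d) (j : Fin e), AnalyticAt ℝ (fun t => A t i j) x

/-- `P` is an orthogonal projection matrix (w.r.t. the Hermitian inner product). -/
def IsOrthProj {d : ℕ} (P : Matrix (Fin d) (Fin d) ℂ) : Prop :=
  P * P = P ∧ Pᴴ = P

/-- The range (column span) of a matrix, as a subspace of `ℂ^d`. -/
noncomputable def matRange {d e : ℕ} (M : Matrix (Fin d) (Fin e) ℂ) : Submodule ℂ (Fin d → ℂ) :=
  LinearMap.range M.mulVecLin

/-!
For a Hermitian matrix `M` with kernel of dimension `n`, the characteristic polynomial factors as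
`X ^ n * g` with `g 0 ≠ 0`, and `1 - g(M) / g(0)` is the orthogonal projection onto the range of
`M`: in an eigenbasis it is `0` on the kernel and `1` on every other eigenvector. Its entries are
polynomials in the entries of `M` and the coefficients of its characteristic polynomial, divided
by `g 0 = M.charpoly.coeff n ≠ 0`, so along an analytic Hermitian family of constant rank it is
analytic. The theorem follows by applying this to `P + Q`, whose range is `ran P + ran Q`, and to
`(1 - P) + (1 - Q)`, whose kernel is `ran P ∩ ran Q`.
-/

open Polynomial

namespace Matrix

section CommRing

variable {R : Type*} [CommRing R] {ι κ κ' : Type*}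

lemma range_mulVecLin_mul_le [Fintype κ] [Fintype κ'] (A : Matrix ι κ R) (B : Matrix κ κ' R) :
    LinearMap.range (A * B).mulVecLin ≤ LinearMap.range A.mulVecLin := by
  rw [mulVecLin_mul]
  exact LinearMap.range_comp_le_range _ _

lemma ker_mulVecLin_le_mul [Fintype κ] [Fintype κ'] (A : Matrix ι κ R) (B : Matrix κ κ' R) :
    LinearMap.ker B.mulVecLin ≤ LinearMap.ker (A * B).mulVecLin := by
  rw [mulVecLin_mul]
  exact LinearMap.ker_le_ker_comp _ _

lemma range_mulVecLin_fromCols [Fintype κ] [Fintype κ'] (A : Matrix ι κ R)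
    (B : Matrix ι κ' R) :
    LinearMap.range (fromCols A B).mulVecLin =
      LinearMap.range A.mulVecLin ⊔ LinearMap.range B.mulVecLin := by
  apply le_antisymm
  · rintro _ ⟨v, rfl⟩
    rw [mulVecLin_apply, fromCols_mulVec]
    exact Submodule.add_mem_sup ⟨_, rfl⟩ ⟨_, rfl⟩
  · refine sup_le ?_ ?_
    · rintro _ ⟨v, rfl⟩
      exact ⟨Sum.elim v 0, by simp⟩
    · rintro _ ⟨v, rfl⟩
      exact ⟨Sum.elim 0 v, by simp⟩

lemma ker_mulVecLin_fromRows [Fintype ι] (A : Matrix κ ι R) (B : Matrix κ' ι R) :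
    LinearMap.ker (fromRows A B).mulVecLin =
      LinearMap.ker A.mulVecLin ⊓ LinearMap.ker B.mulVecLin := by
  ext v
  simp [fromRows_mulVec, ← Sum.elim_zero_zero, Sum.elim_eq_iff]

lemma ker_mulVecLin_one_sub [Fintype ι] [DecidableEq ι] {P : Matrix ι ι R}
    (hP : IsIdempotentElem P) :
    LinearMap.ker (1 - P).mulVecLin = LinearMap.range P.mulVecLin := by
  ext v
  simp only [LinearMap.mem_ker, LinearMap.mem_range, mulVecLin_apply, sub_mulVec, one_mulVec,
    sub_eq_zero]
  refine ⟨fun h => ⟨v, h.symm⟩, ?_⟩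
  rintro ⟨w, rfl⟩
  rw [mulVec_mulVec, hP.eq]

lemma range_mulVecLin_one_sub [Fintype ι] [DecidableEq ι] {P : Matrix ι ι R}
    (hP : IsIdempotentElem P) :
    LinearMap.range (1 - P).mulVecLin = LinearMap.ker P.mulVecLin := by
  simpa using (ker_mulVecLin_one_sub hP.one_sub).symm

lemma aeval_diagonal [Fintype ι] [DecidableEq ι] (v : ι → R) (q : R[X]) :
    aeval (diagonal v) q = diagonal fun i => q.eval (v i) := by
  rw [← diagonalAlgHom_apply (R := R), aeval_algHom_apply, aeval_pi_apply]
  simp [diagonalAlgHom_apply]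

end CommRing

section RCLike

variable {𝕜 : Type*} [RCLike 𝕜] {ι κ κ' : Type*} [Fintype κ] [Fintype κ']

open scoped ComplexOrder

lemma range_mulVecLin_self_mul_conjTranspose [Fintype ι] (A : Matrix ι κ 𝕜) :
    LinearMap.range (A * Aᴴ).mulVecLin = LinearMap.range A.mulVecLin :=
  Submodule.eq_of_le_of_finrank_eq (range_mulVecLin_mul_le A Aᴴ)
    (rank_self_mul_conjTranspose A)

lemma fromCols_mul_conjTranspose_fromCols (A : Matrix ι κ 𝕜) (B : Matrix ι κ' 𝕜) :
    fromCols A B * (fromCols A B)ᴴ = A * Aᴴ + B * Bᴴ := by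
  rw [conjTranspose_fromCols_eq_fromRows_conjTranspose, fromCols_mul_fromRows]

lemma range_mulVecLin_add_mul_conjTranspose [Fintype ι] (A : Matrix ι κ 𝕜)
    (B : Matrix ι κ' 𝕜) :
    LinearMap.range (A * Aᴴ + B * Bᴴ).mulVecLin =
      LinearMap.range A.mulVecLin ⊔ LinearMap.range B.mulVecLin := by
  rw [← fromCols_mul_conjTranspose_fromCols, range_mulVecLin_self_mul_conjTranspose,
    range_mulVecLin_fromCols]

lemma ker_mulVecLin_add_mul_conjTranspose [Fintype ι] (A : Matrix ι κ 𝕜)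
    (B : Matrix ι κ' 𝕜) :
    LinearMap.ker (A * Aᴴ + B * Bᴴ).mulVecLin =
      LinearMap.ker Aᴴ.mulVecLin ⊓ LinearMap.ker Bᴴ.mulVecLin := by
  rw [← fromCols_mul_conjTranspose_fromCols, ← ker_mulVecLin_fromRows,
    ← conjTranspose_fromCols_eq_fromRows_conjTranspose]
  simpa using ker_mulVecLin_conjTranspose_mul_self (fromCols A B)ᴴ

lemma _root_.IsStarProjection.mul_conjTranspose_self [Fintype ι] {P : Matrix ι ι 𝕜}
    (hP : IsStarProjection P) : P * Pᴴ = P := by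
  rw [← star_eq_conjTranspose, hP.isSelfAdjoint.star_eq, hP.isIdempotentElem.eq]

variable [Fintype ι] {P Q : Matrix ι ι 𝕜}

lemma range_mulVecLin_add_of_isStarProjection (hP : IsStarProjection P)
    (hQ : IsStarProjection Q) :
    LinearMap.range (P + Q).mulVecLin =
      LinearMap.range P.mulVecLin ⊔ LinearMap.range Q.mulVecLin := by
  simpa only [hP.mul_conjTranspose_self, hQ.mul_conjTranspose_self] using
    range_mulVecLin_add_mul_conjTranspose P Q

lemma ker_mulVecLin_add_of_isStarProjection (hP : IsStarProjection P)
    (hQ : IsStarProjection Q) :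
    LinearMap.ker (P + Q).mulVecLin = LinearMap.ker P.mulVecLin ⊓ LinearMap.ker Q.mulVecLin := by
  simpa only [← star_eq_conjTranspose, hP.isSelfAdjoint.star_eq, hQ.isSelfAdjoint.star_eq,
    hP.isIdempotentElem.eq, hQ.isIdempotentElem.eq] using ker_mulVecLin_add_mul_conjTranspose P Q

end RCLike

section Spectral

variable {𝕜 : Type*} [RCLike 𝕜] {ι : Type*} [Fintype ι] [DecidableEq ι] {M : Matrix ι ι 𝕜}

open Unitary in
lemma IsHermitian.aeval_eq (hM : M.IsHermitian) (q : 𝕜[X]) :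
    aeval M q = conjStarAlgAut 𝕜 _ hM.eigenvectorUnitary
      (diagonal fun i => q.eval (hM.eigenvalues i : 𝕜)) := by
  conv_lhs => rw [hM.spectral_theorem]
  rw [aeval_algHom_apply, aeval_diagonal]
  rfl

variable {q : 𝕜[X]}

lemma IsHermitian.isStarProjection_aeval (hM : M.IsHermitian) (hq₀ : q.eval 0 = 0)
    (hq₁ : ∀ i, hM.eigenvalues i ≠ 0 → q.eval (hM.eigenvalues i : 𝕜) = 1) :
    IsStarProjection (aeval M q) := by
  rw [hM.aeval_eq]
  refine IsStarProjection.map ⟨?_, ?_⟩ _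
  · rw [IsIdempotentElem, diagonal_mul_diagonal]
    congr 1 with i
    by_cases h : hM.eigenvalues i = 0 <;> simp [h, hq₀, hq₁]
  · rw [IsSelfAdjoint, star_eq_conjTranspose, diagonal_conjTranspose]
    congr 1 with i
    by_cases h : hM.eigenvalues i = 0 <;> simp [h, hq₀, hq₁]

lemma IsHermitian.aeval_mul_X_eq_self (hM : M.IsHermitian)
    (hq₁ : ∀ i, hM.eigenvalues i ≠ 0 → q.eval (hM.eigenvalues i : 𝕜) = 1) :
    aeval M (q * X) = M := by
  rw [hM.aeval_eq]
  conv_rhs => rw [hM.spectral_theorem]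
  congr 2 with i
  by_cases h : hM.eigenvalues i = 0 <;> simp [h, hq₁]

lemma IsHermitian.range_mulVecLin_aeval (hM : M.IsHermitian) (hq₀ : q.eval 0 = 0)
    (hq₁ : ∀ i, hM.eigenvalues i ≠ 0 → q.eval (hM.eigenvalues i : 𝕜) = 1) :
    LinearMap.range (aeval M q).mulVecLin = LinearMap.range M.mulVecLin := by
  have hM' := hM.aeval_mul_X_eq_self hq₁
  obtain ⟨r, rfl⟩ : X ∣ q := X_dvd_iff.mpr (by rwa [coeff_zero_eq_eval_zero])
  simp only [map_mul, aeval_X] at hM' ⊢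
  refine le_antisymm (range_mulVecLin_mul_le _ _) ?_
  calc LinearMap.range M.mulVecLin
      = LinearMap.range (M * aeval M r * M).mulVecLin := by rw [hM']
    _ ≤ _ := range_mulVecLin_mul_le _ _

lemma IsHermitian.ker_mulVecLin_aeval (hM : M.IsHermitian) (hq₀ : q.eval 0 = 0)
    (hq₁ : ∀ i, hM.eigenvalues i ≠ 0 → q.eval (hM.eigenvalues i : 𝕜) = 1) :
    LinearMap.ker (aeval M q).mulVecLin = LinearMap.ker M.mulVecLin := by
  have hM' := hM.aeval_mul_X_eq_self hq₁
  obtain ⟨r, rfl⟩ : X ∣ q := X_dvd_iff.mpr (by rwa [coeff_zero_eq_eval_zero])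
  rw [mul_comm X r]
  simp only [map_mul, aeval_X] at hM' ⊢
  refine le_antisymm ?_ (ker_mulVecLin_le_mul _ _)
  calc LinearMap.ker (aeval M r * M).mulVecLin ≤ LinearMap.ker (M * (aeval M r * M)).mulVecLin :=
        ker_mulVecLin_le_mul _ _
    _ = LinearMap.ker M.mulVecLin := by rw [← mul_assoc, hM']

lemma IsHermitian.exists_charpoly_eq_X_pow_mul (hM : M.IsHermitian) {n : ℕ}
    (hn : M.rank + n = Fintype.card ι) :
    ∃ g : 𝕜[X], M.charpoly = X ^ n * g ∧ g.eval 0 ≠ 0 ∧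
      ∀ i, hM.eigenvalues i ≠ 0 → g.eval (hM.eigenvalues i : 𝕜) = 0 := by
  refine ⟨∏ i ∈ Finset.univ.filter (hM.eigenvalues · ≠ 0), (X - C (hM.eigenvalues i : 𝕜)),
    ?_, ?_, fun i hi => ?_⟩
  · have hzero : (Finset.univ.filter (hM.eigenvalues · = 0)).card = n := by
      have := Finset.card_filter_add_card_filter_not (s := Finset.univ)
        (hM.eigenvalues · = 0)
      rw [hM.rank_eq_card_non_zero_eigs, Fintype.card_subtype] at hn
      simp only [Finset.card_univ, ← ne_eq] at this
      omega
    rw [hM.charpoly_eq, ← Finset.prod_filter_mul_prod_filter_not Finset.univ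
      (hM.eigenvalues · = 0), ← hzero, ← Finset.prod_const]
    congr 1
    exact Finset.prod_congr rfl fun i hi => by simp [(Finset.mem_filter.mp hi).2]
  · rw [eval_prod, Finset.prod_ne_zero_iff]
    intro i hi
    simpa using (Finset.mem_filter.mp hi).2
  · rw [eval_prod]
    exact Finset.prod_eq_zero (Finset.mem_filter.mpr ⟨Finset.mem_univ i, hi⟩) (by simp)

end Spectral

section RangeProj

variable {K : Type*} [Field K] {ι : Type*} [Fintype ι] [DecidableEq ι]

/-- When `M.charpoly = X ^ n * g` with `g 0 ≠ 0`, this is `1 - g(M) / g(0)`. -/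
noncomputable def rangeProj (n : ℕ) (M : Matrix ι ι K) : Matrix ι ι K :=
  1 - (M.charpoly.coeff n)⁻¹ •
    ∑ i ∈ Finset.range (Fintype.card ι + 1), M.charpoly.coeff (n + i) • M ^ i

lemma rangeProj_eq_aeval {n : ℕ} {M : Matrix ι ι K} {g : K[X]} (hg : M.charpoly = X ^ n * g) :
    rangeProj n M = aeval M (1 - C (g.coeff 0)⁻¹ * g) := by
  have hdeg : g.natDegree < Fintype.card ι + 1 := by
    rw [Nat.lt_succ_iff, ← M.charpoly_natDegree_eq_dim]
    exact natDegree_le_of_dvd (hg ▸ dvd_mul_left g _) M.charpoly_monic.ne_zero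
  rw [map_sub, map_one, map_mul, aeval_C, aeval_eq_sum_range' hdeg, rangeProj, hg]
  simp [coeff_X_pow_mul', Algebra.smul_def]

end RangeProj

section HermitianRangeProj

variable {𝕜 : Type*} [RCLike 𝕜] {ι : Type*} [Fintype ι] [DecidableEq ι] {M : Matrix ι ι 𝕜}
  {n : ℕ}

lemma IsHermitian.charpoly_coeff_ne_zero (hM : M.IsHermitian)
    (hn : M.rank + n = Fintype.card ι) :
    M.charpoly.coeff n ≠ 0 := by
  obtain ⟨g, hg, hg₀, -⟩ := hM.exists_charpoly_eq_X_pow_mul hn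
  simpa [hg, coeff_X_pow_mul', ← coeff_zero_eq_eval_zero] using hg₀

lemma IsHermitian.exists_rangeProj_eq_aeval (hM : M.IsHermitian)
    (hn : M.rank + n = Fintype.card ι) :
    ∃ q : 𝕜[X], rangeProj n M = aeval M q ∧ q.eval 0 = 0 ∧
      ∀ i, hM.eigenvalues i ≠ 0 → q.eval (hM.eigenvalues i : 𝕜) = 1 := by
  obtain ⟨g, hg, hg₀, hg₁⟩ := hM.exists_charpoly_eq_X_pow_mul hn
  rw [← coeff_zero_eq_eval_zero] at hg₀
  refine ⟨_, rangeProj_eq_aeval hg, ?_, fun i hi => ?_⟩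
  · simp [← coeff_zero_eq_eval_zero, hg₀]
  · simp [hg₁ i hi]

lemma IsHermitian.isStarProjection_rangeProj (hM : M.IsHermitian)
    (hn : M.rank + n = Fintype.card ι) : IsStarProjection (rangeProj n M) := by
  obtain ⟨q, hq, hq₀, hq₁⟩ := hM.exists_rangeProj_eq_aeval hn
  exact hq ▸ hM.isStarProjection_aeval hq₀ hq₁

lemma IsHermitian.range_mulVecLin_rangeProj (hM : M.IsHermitian)
    (hn : M.rank + n = Fintype.card ι) :
    LinearMap.range (rangeProj n M).mulVecLin = LinearMap.range M.mulVecLin := by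
  obtain ⟨q, hq, hq₀, hq₁⟩ := hM.exists_rangeProj_eq_aeval hn
  exact hq ▸ hM.range_mulVecLin_aeval hq₀ hq₁

lemma IsHermitian.ker_mulVecLin_rangeProj (hM : M.IsHermitian)
    (hn : M.rank + n = Fintype.card ι) :
    LinearMap.ker (rangeProj n M).mulVecLin = LinearMap.ker M.mulVecLin := by
  obtain ⟨q, hq, hq₀, hq₁⟩ := hM.exists_rangeProj_eq_aeval hn
  exact hq ▸ hM.ker_mulVecLin_aeval hq₀ hq₁

end HermitianRangeProj

section Analytic

variable {𝕜 : Type*} [NontriviallyNormedField 𝕜] {K : Type*} [NormedField K] [NormedAlgebra 𝕜 K]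
  {ι : Type*} [Fintype ι] [DecidableEq ι] {A : 𝕜 → Matrix ι ι K} {x : 𝕜}

lemma analyticAt_charpoly_coeff (hA : ∀ i j, AnalyticAt 𝕜 (fun t => A t i j) x) (k : ℕ) :
    AnalyticAt 𝕜 (fun t => (A t).charpoly.coeff k) x := by
  have := AnalyticAt.aeval_mvPolynomial (f := fun t (ij : ι × ι) => A t ij.1 ij.2)
    (fun ij => hA ij.1 ij.2) ((charpoly.univ ℤ ι).coeff k)
  simp only [MvPolynomial.aeval_eq_eval₂Hom, charpoly.univ_coeff_eval₂Hom] at this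
  exact this

lemma analyticAt_pow_apply (hA : ∀ i j, AnalyticAt 𝕜 (fun t => A t i j) x) (k : ℕ) (i j : ι) :
    AnalyticAt 𝕜 (fun t => (A t ^ k) i j) x := by
  induction k generalizing i j with
  | zero => simpa [one_apply] using analyticAt_const
  | succ k ih =>
    simp only [pow_succ, mul_apply]
    exact Finset.analyticAt_fun_sum _ fun l _ => (ih i l).mul (hA l j)

lemma analyticAt_rangeProj_apply (hA : ∀ i j, AnalyticAt 𝕜 (fun t => A t i j) x) {n : ℕ}
    (hn : (A x).charpoly.coeff n ≠ 0) (i j : ι) :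
    AnalyticAt 𝕜 (fun t => rangeProj n (A t) i j) x := by
  simp only [rangeProj, sub_apply, smul_apply, sum_apply, smul_eq_mul]
  refine analyticAt_const.sub (((analyticAt_charpoly_coeff hA n).inv hn).mul ?_)
  exact Finset.analyticAt_fun_sum _ fun l _ =>
    (analyticAt_charpoly_coeff hA _).mul (analyticAt_pow_apply hA l i j)

end Analytic

end Matrix

lemma isOrthProj_iff_isStarProjection {d : ℕ} {P : Matrix (Fin d) (Fin d) ℂ} :
    IsOrthProj P ↔ IsStarProjection P := by
  rw [IsOrthProj, isStarProjection_iff', star_eq_conjTranspose]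

namespace AnalyticPeriodicMat

variable {d : ℕ} {A B P Q : ℝ → Matrix (Fin d) (Fin d) ℂ}

lemma add (hA : AnalyticPeriodicMat A) (hB : AnalyticPeriodicMat B) :
    AnalyticPeriodicMat fun x => A x + B x :=
  ⟨fun x => by simp only [hA.1 x, hB.1 x], fun x i j => (hA.2 x i j).add (hB.2 x i j)⟩

lemma one_sub (hA : AnalyticPeriodicMat A) : AnalyticPeriodicMat fun x => 1 - A x :=
  ⟨fun x => by simp only [hA.1 x], fun x i j => analyticAt_const.sub (hA.2 x i j)⟩

lemma rangeProj (hA : AnalyticPeriodicMat A) (hherm : ∀ x, (A x).IsHermitian) {n : ℕ}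
    (hn : ∀ x, (A x).rank + n = Fintype.card (Fin d)) :
    AnalyticPeriodicMat fun x => (A x).rangeProj n :=
  ⟨fun x => by simp only [hA.1 x], fun x => analyticAt_rangeProj_apply (hA.2 x)
    ((hherm x).charpoly_coeff_ne_zero (hn x))⟩

lemma exists_isOrthProj_inf (hP : AnalyticPeriodicMat P) (hQ : AnalyticPeriodicMat Q)
    (hPproj : ∀ x, IsOrthProj (P x)) (hQproj : ∀ x, IsOrthProj (Q x)) {m : ℕ}
    (hm : ∀ x, Module.finrank ℂ ↥(matRange (P x) ⊓ matRange (Q x)) = m) :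
    ∃ R : ℝ → Matrix (Fin d) (Fin d) ℂ, AnalyticPeriodicMat R ∧
      ∀ x, IsOrthProj (R x) ∧ matRange (R x) = matRange (P x) ⊓ matRange (Q x) := by
  have hP' x := isOrthProj_iff_isStarProjection.mp (hPproj x)
  have hQ' x := isOrthProj_iff_isStarProjection.mp (hQproj x)
  set A := fun x => (1 - P x) + (1 - Q x)
  have hherm x : (A x).IsHermitian := isHermitian_iff_isSelfAdjoint.mpr
    ((hP' x).one_sub.isSelfAdjoint.add (hQ' x).one_sub.isSelfAdjoint)
  have hker x : LinearMap.ker (A x).mulVecLin = matRange (P x) ⊓ matRange (Q x) := by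
    rw [ker_mulVecLin_add_of_isStarProjection (hP' x).one_sub (hQ' x).one_sub,
      ker_mulVecLin_one_sub (hP' x).isIdempotentElem,
      ker_mulVecLin_one_sub (hQ' x).isIdempotentElem, matRange, matRange]
  have hrank x : (A x).rank + m = Fintype.card (Fin d) := by
    rw [← hm x, ← hker x, rank, LinearMap.finrank_range_add_finrank_ker, Module.finrank_fin_fun,
      Fintype.card_fin]
  have hR x := (hherm x).isStarProjection_rangeProj (hrank x)
  refine ⟨fun x => 1 - (A x).rangeProj m,
    ((hP.one_sub.add hQ.one_sub).rangeProj hherm hrank).one_sub,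
    fun x => ⟨isOrthProj_iff_isStarProjection.mpr (hR x).one_sub, ?_⟩⟩
  rw [matRange, range_mulVecLin_one_sub (hR x).isIdempotentElem,
    (hherm x).ker_mulVecLin_rangeProj (hrank x), hker]

lemma exists_isOrthProj_sup (hP : AnalyticPeriodicMat P) (hQ : AnalyticPeriodicMat Q)
    (hPproj : ∀ x, IsOrthProj (P x)) (hQproj : ∀ x, IsOrthProj (Q x)) {m : ℕ}
    (hm : ∀ x, Module.finrank ℂ ↥(matRange (P x) ⊔ matRange (Q x)) = m) :
    ∃ R : ℝ → Matrix (Fin d) (Fin d) ℂ, AnalyticPeriodicMat R ∧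
      ∀ x, IsOrthProj (R x) ∧ matRange (R x) = matRange (P x) ⊔ matRange (Q x) := by
  have hP' x := isOrthProj_iff_isStarProjection.mp (hPproj x)
  have hQ' x := isOrthProj_iff_isStarProjection.mp (hQproj x)
  set A := fun x => P x + Q x
  have hherm x : (A x).IsHermitian :=
    isHermitian_iff_isSelfAdjoint.mpr ((hP' x).isSelfAdjoint.add (hQ' x).isSelfAdjoint)
  have hrange x : LinearMap.range (A x).mulVecLin = matRange (P x) ⊔ matRange (Q x) :=
    range_mulVecLin_add_of_isStarProjection (hP' x) (hQ' x)
  have hrank x : (A x).rank + (d - m) = Fintype.card (Fin d) := by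
    have hmd : m ≤ d := hm x ▸ (Submodule.finrank_le _).trans_eq (by simp)
    rw [rank, hrange, hm x, Fintype.card_fin]
    omega
  refine ⟨fun x => (A x).rangeProj (d - m), (hP.add hQ).rangeProj hherm hrank, fun x =>
    ⟨isOrthProj_iff_isStarProjection.mpr ((hherm x).isStarProjection_rangeProj (hrank x)), ?_⟩⟩
  rw [matRange, (hherm x).range_mulVecLin_rangeProj (hrank x), hrange]

end AnalyticPeriodicMat

theorem stmt_14_general {d : ℕ} (P Q : ℝ → Matrix (Fin d) (Fin d) ℂ)
    (hP : AnalyticPeriodicMat P)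
    (hQ : AnalyticPeriodicMat Q)
    (hPproj : ∀ x : ℝ, IsOrthProj (P x))
    (hQproj : ∀ x : ℝ, IsOrthProj (Q x)) :
    ((∃ m : ℕ, ∀ x : ℝ, Module.finrank ℂ ↥(matRange (P x) ⊓ matRange (Q x)) = m) →
      ∃ R : ℝ → Matrix (Fin d) (Fin d) ℂ,
        AnalyticPeriodicMat R ∧
        ∀ x : ℝ, IsOrthProj (R x) ∧
          matRange (R x) = matRange (P x) ⊓ matRange (Q x)) ∧
    ((∃ m : ℕ, ∀ x : ℝ, Module.finrank ℂ ↥(matRange (P x) ⊔ matRange (Q x)) = m) →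
      ∃ R : ℝ → Matrix (Fin d) (Fin d) ℂ,
        AnalyticPeriodicMat R ∧
        ∀ x : ℝ, IsOrthProj (R x) ∧
          matRange (R x) = matRange (P x) ⊔ matRange (Q x)) :=
  ⟨fun ⟨_, hm⟩ => hP.exists_isOrthProj_inf hQ hPproj hQproj hm,
    fun ⟨_, hm⟩ => hP.exists_isOrthProj_sup hQ hPproj hQproj hm⟩

/-- If `P(x)`, `Q(x)` are analytic 1-periodic families of orthogonal
projections of constant ranks `k` and `k'`, then: if `dim (ran P(x) ∩ ran Q(x))` is constant
in `x`, the family of orthogonal projections onto `ran P(x) ∩ ran Q(x)` is real analytic and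
1-periodic; likewise if `dim (ran P(x) + ran Q(x))` is constant in `x`, the family of
orthogonal projections onto `ran P(x) + ran Q(x)` is real analytic and 1-periodic. -/
theorem stmt_14 {d k k' : ℕ} (P Q : ℝ → Matrix (Fin d) (Fin d) ℂ)
    (hP : AnalyticPeriodicMat P)
    (hQ : AnalyticPeriodicMat Q)
    (hPproj : ∀ x : ℝ, IsOrthProj (P x))
    (hQproj : ∀ x : ℝ, IsOrthProj (Q x))
    (hPrank : ∀ x : ℝ, (P x).rank = k)
    (hQrank : ∀ x : ℝ, (Q x).rank = k') :
    ((∃ m : ℕ, ∀ x : ℝ, Module.finrank ℂ ↥(matRange (P x) ⊓ matRange (Q x)) = m) →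
      ∃ R : ℝ → Matrix (Fin d) (Fin d) ℂ,
        AnalyticPeriodicMat R ∧
        ∀ x : ℝ, IsOrthProj (R x) ∧
          matRange (R x) = matRange (P x) ⊓ matRange (Q x)) ∧
    ((∃ m : ℕ, ∀ x : ℝ, Module.finrank ℂ ↥(matRange (P x) ⊔ matRange (Q x)) = m) →
      ∃ R : ℝ → Matrix (Fin d) (Fin d) ℂ,
        AnalyticPeriodicMat R ∧
        ∀ x : ℝ, IsOrthProj (R x) ∧
          matRange (R x) = matRange (P x) ⊔ matRange (Q x)) :=
  stmt_14_general P Q hP hQ hPproj hQproj
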